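/- arXiv:nlin/0604001 — 4 statements merged into one kernel-verified Lean document; each statement's English description precedes it below -/
import Mathlib

section
/- Let R be a (not necessarily commutative) ring with unity and let D, D′ be derivations of R that commute: D(D′(x)) = D′(D(x)) for all x ∈ R. Let W be a unit of R and let B, Λ, B′, Λ′ ∈ R satisfy the two Sato equations D(W) = B·W − W·Λ and D′(W) = B′·W − W·Λ′, together with the vacuum zero-curvature condition D′(Λ) − D(Λ′) + [Λ, Λ′] = 0. Then the Zakharov–Shabat equation D′(B) − D(B′) + [B, B′] = 0 holds. (This is the Zakharov–Shabat part of Theorem 2.4 of the paper: applied to the pairs (∂_{t_n}, ∂_{t_m}), (∂_{t_n}, ∂_{a_m}) and (∂_{a_n}, ∂_{a_m}) it gives equations (2.34)–(2.36), since σ₃λⁿ and S_m commute and are annihilated by the other derivations.) -/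
/-- Zakharov–Shabat part of Theorem 2.4 of the paper, abstract form.
If `W` is a unit of a (not necessarily commutative) ring `R`, `D` and `D'` are
commuting derivations of `R`, the two Sato equations `D W = B * W - W * Λ` and
`D' W = B' * W - W * Λ'` hold, and the vacuum zero-curvature condition
`D' Λ - D Λ' + [Λ, Λ'] = 0` holds, then the Zakharov–Shabat equation
`D' B - D B' + [B, B'] = 0` holds. -/
theorem zakharov_shabat_equation
    {R : Type*} [Ring R] (D D' : R → R)
    (hadd : ∀ x y : R, D (x + y) = D x + D y)
    (hleibniz : ∀ x y : R, D (x * y) = D x * y + x * D y)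
    (hadd' : ∀ x y : R, D' (x + y) = D' x + D' y)
    (hleibniz' : ∀ x y : R, D' (x * y) = D' x * y + x * D' y)
    (hcommute : ∀ x : R, D (D' x) = D' (D x))
    (W : Rˣ) (B Λ B' Λ' : R)
    (hSato : D (W : R) = B * (W : R) - (W : R) * Λ)
    (hSato' : D' (W : R) = B' * (W : R) - (W : R) * Λ')
    (hvac : D' Λ - D Λ' + (Λ * Λ' - Λ' * Λ) = 0) :
    D' B - D B' + (B * B' - B' * B) = 0 := by
  have hBW : B * (W : R) = D (W : R) + (W : R) * Λ := by rw [hSato]; abel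
  have hB'W : B' * (W : R) = D' (W : R) + (W : R) * Λ' := by rw [hSato']; abel
  have e1 : D' B * (W : R) + B * D' (W : R)
      = D' (D (W : R)) + (D' (W : R) * Λ + (W : R) * D' Λ) := by
    rw [← hleibniz', hBW, hadd', hleibniz']
  have e2 : D B' * (W : R) + B' * D (W : R)
      = D (D' (W : R)) + (D (W : R) * Λ' + (W : R) * D Λ') := by
    rw [← hleibniz, hB'W, hadd, hleibniz]
  have key : (D' B - D B' + (B * B' - B' * B)) * (W : R)
      = (W : R) * (D' Λ - D Λ' + (Λ * Λ' - Λ' * Λ)) := by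
    have f1 : D' B * (W : R)
        = D' (D (W : R)) + (D' (W : R) * Λ + (W : R) * D' Λ) - B * D' (W : R) :=
      eq_sub_of_add_eq e1
    have f2 : D B' * (W : R)
        = D' (D (W : R)) + (D (W : R) * Λ' + (W : R) * D Λ') - B' * D (W : R) := by
      rw [← hcommute]; exact eq_sub_of_add_eq e2
    simp only [hSato, hSato'] at f1 f2
    have expand : (D' B - D B' + (B * B' - B' * B)) * (W : R)
        = D' B * (W : R) - D B' * (W : R) + (B * B' - B' * B) * (W : R) := by
      noncomm_ring
    rw [expand, f1, f2]
    noncomm_ring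
  have hz : (D' B - D B' + (B * B' - B' * B)) * (W : R) = 0 := by
    rw [key, hvac, mul_zero]
  have := congrArg (· * ((W⁻¹ : Rˣ) : R)) hz
  simpa [mul_assoc] using this
end

section
/- Let Ω ⊆ {(s,r) ∈ ℝ² : s ≠ r} be an open set and let R_N, R_M : Ω → M₂ be differentiable matrix-valued functions. Suppose that for every (s,r) ∈ Ω and every real λ ∉ {s, r}, the Zakharov–Shabat equation ∂_r C_N(λ) − ∂_s C_M(λ) + [C_N(λ), C_M(λ)] = 0 holds, where C_N(λ) := −R_N(s,r)/(λ−s) and C_M(λ) := −R_M(s,r)/(λ−r) (so ∂_r C_N(λ) = −∂_r R_N/(λ−s) and ∂_s C_M(λ) = −∂_s R_M/(λ−r)). Then at every point of Ω the Schlesinger-type equations hold: ∂_s R_M = [R_N, R_M]/(s−r) and ∂_r R_N = [R_N, R_M]/(s−r). (Here s plays the role of a_n, r of a_m, and R_N, R_M of the residue matrices R_n, R_m of equation (2.61) of the paper.) -/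
noncomputable section

attribute [local instance] Matrix.normedAddCommGroup Matrix.normedSpace

/-- The commutator `[X, Y] = X*Y - Y*X` of 2×2 complex matrices. -/
def matComm (X Y : Matrix (Fin 2) (Fin 2) ℂ) : Matrix (Fin 2) (Fin 2) ℂ :=
  X * Y - Y * X

/-- Partial derivative in the first variable `s`. -/
def pdS (F : ℝ × ℝ → Matrix (Fin 2) (Fin 2) ℂ) (p : ℝ × ℝ) :
    Matrix (Fin 2) (Fin 2) ℂ :=
  fderiv ℝ F p (1, 0)

/-- Partial derivative in the second variable `r`. -/
def pdR (F : ℝ × ℝ → Matrix (Fin 2) (Fin 2) ℂ) (p : ℝ × ℝ) :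
    Matrix (Fin 2) (Fin 2) ℂ :=
  fderiv ℝ F p (0, 1)

lemma matComm_neg_smul (u v : ℂ) (X Y : Matrix (Fin 2) (Fin 2) ℂ) :
    matComm (-(u • X)) (-(v • Y)) = (u * v) • matComm X Y := by
  simp only [matComm, neg_mul_neg, smul_mul_assoc, mul_smul_comm, smul_smul,
    mul_comm v u, smul_sub]

lemma key_step {A B K : Matrix (Fin 2) (Fin 2) ℂ} {u v : ℂ} (hu : u ≠ 0) (hv : v ≠ 0)
    (h : -(u⁻¹ • A) - -(v⁻¹ • B) + (u⁻¹ * v⁻¹) • K = 0) :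
    v • A = u • B + K := by
  have h2 := congrArg (fun X => (u * v) • X) h
  simp only [smul_add, smul_sub, smul_neg, smul_smul, smul_zero] at h2
  rw [show u * v * u⁻¹ = v by field_simp,
    show u * v * v⁻¹ = u by field_simp,
    show u * v * (u⁻¹ * v⁻¹) = 1 by field_simp, one_smul] at h2
  have h3 : (u • B + K) - v • A = -(v • A) - -(u • B) + K := by abel
  rw [h2, sub_eq_zero] at h3
  exact h3.symm

/-- Schlesinger-type equations (2.61) of the paper.
If `C_N(λ) = -R_N/(λ-s)` and `C_M(λ) = -R_M/(λ-r)` satisfy the Zakharov–Shabat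
equation `∂_r C_N - ∂_s C_M + [C_N, C_M] = 0` for all `λ ∉ {s, r}`, then
`∂_s R_M = [R_N, R_M]/(s-r)` and `∂_r R_N = [R_N, R_M]/(s-r)` on `Ω`. -/
theorem schlesinger_type_equations
    (Ω : Set (ℝ × ℝ)) (hΩopen : IsOpen Ω) (hΩ : ∀ p ∈ Ω, p.1 ≠ p.2)
    (RN RM : ℝ × ℝ → Matrix (Fin 2) (Fin 2) ℂ)
    (hdN : ∀ p ∈ Ω, DifferentiableAt ℝ RN p)
    (hdM : ∀ p ∈ Ω, DifferentiableAt ℝ RM p)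
    (hZS : ∀ p ∈ Ω, ∀ lam : ℝ, lam ≠ p.1 → lam ≠ p.2 →
      (-(((lam - p.1 : ℝ) : ℂ)⁻¹ • pdR RN p)) -
        (-(((lam - p.2 : ℝ) : ℂ)⁻¹ • pdS RM p)) +
        matComm (-(((lam - p.1 : ℝ) : ℂ)⁻¹ • RN p))
          (-(((lam - p.2 : ℝ) : ℂ)⁻¹ • RM p)) = 0) :
    ∀ p ∈ Ω,
      pdS RM p = ((p.1 - p.2 : ℝ) : ℂ)⁻¹ • matComm (RN p) (RM p) ∧
      pdR RN p = ((p.1 - p.2 : ℝ) : ℂ)⁻¹ • matComm (RN p) (RM p) := by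
  intro p hp
  set s := p.1 with hs
  set r := p.2 with hr
  set A := pdR RN p with hA
  set B := pdS RM p with hB
  set K := matComm (RN p) (RM p) with hK
  set l : ℝ := max s r + 1 with hl
  have hls : l ≠ s := by
    have := le_max_left s r; dsimp [l]; intro h; linarith
  have hlr : l ≠ r := by
    have := le_max_right s r; dsimp [l]; intro h; linarith
  have hls2 : l + 1 ≠ s := by
    have := le_max_left s r; dsimp [l]; intro h; linarith
  have hlr2 : l + 1 ≠ r := by
    have := le_max_right s r; dsimp [l]; intro h; linarith
  have hu1 : ((l - s : ℝ) : ℂ) ≠ 0 := by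
    exact_mod_cast sub_ne_zero.mpr hls
  have hv1 : ((l - r : ℝ) : ℂ) ≠ 0 := by
    exact_mod_cast sub_ne_zero.mpr hlr
  have hu2 : ((l + 1 - s : ℝ) : ℂ) ≠ 0 := by
    exact_mod_cast sub_ne_zero.mpr hls2
  have hv2 : ((l + 1 - r : ℝ) : ℂ) ≠ 0 := by
    exact_mod_cast sub_ne_zero.mpr hlr2
  have e1 := hZS p hp l hls hlr
  have e2 := hZS p hp (l + 1) hls2 hlr2
  rw [matComm_neg_smul] at e1 e2
  rw [show (((l - s : ℝ) : ℂ)⁻¹ * ((l - r : ℝ) : ℂ)⁻¹)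
      = ((l - s : ℝ) : ℂ)⁻¹ * ((l - r : ℝ) : ℂ)⁻¹ from rfl] at e1
  have E1 : ((l - r : ℝ) : ℂ) • A = ((l - s : ℝ) : ℂ) • B + K :=
    key_step hu1 hv1 e1
  have E2 : ((l + 1 - r : ℝ) : ℂ) • A = ((l + 1 - s : ℝ) : ℂ) • B + K :=
    key_step hu2 hv2 e2
  have hcast1 : ((l + 1 - r : ℝ) : ℂ) = ((l - r : ℝ) : ℂ) + 1 := by push_cast; ring
  have hcast2 : ((l + 1 - s : ℝ) : ℂ) = ((l - s : ℝ) : ℂ) + 1 := by push_cast; ring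
  rw [hcast1, hcast2, add_smul, add_smul, one_smul, one_smul, E1] at E2
  -- E2 : (↑(l - s) • B + K) + A = (↑(l - s) • B + B) + K
  have hAB : A - B = 0 := by
    have habel : A - B = ((((l - s : ℝ) : ℂ) • B + K) + A)
        - ((((l - s : ℝ) : ℂ) • B + B) + K) := by abel
    rw [habel, E2, sub_self]
  have hABeq : A = B := sub_eq_zero.mp hAB
  have hsr : ((s - r : ℝ) : ℂ) ≠ 0 :=
    by exact_mod_cast sub_ne_zero.mpr (hΩ p hp)
  have hKA : ((s - r : ℝ) : ℂ) • A = K := by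
    have hc : ((s - r : ℝ) : ℂ) = ((l - r : ℝ) : ℂ) - ((l - s : ℝ) : ℂ) := by
      push_cast; ring
    rw [hc, sub_smul, E1, hABeq]
    abel
  have hAeq : A = ((s - r : ℝ) : ℂ)⁻¹ • K := by
    rw [← hKA, inv_smul_smul₀ hsr]
  exact ⟨hABeq ▸ hAeq, hAeq⟩
end
end

section
/- Let Ω ⊆ ℝ² be open with coordinates (t₁, t₂), and let u, v, f, g : Ω → ℂ be differentiable functions. Set u₁ := [[0, u],[v, 0]] and u₂ := [[−uv/2, f],[g, uv/2]] (2×2 matrices), and define B₁(λ) := u₁ + σ₃λ and B₂(λ) := u₂ + u₁λ + σ₃λ². Suppose that at every point of Ω and for every real λ the Zakharov–Shabat equation ∂_{t₁}B₂(λ) − ∂_{t₂}B₁(λ) + [B₂(λ), B₁(λ)] = 0 holds. Then at every point of Ω the matrix equations ∂_{t₁}u₁ + [u₂, σ₃] = 0 and ∂_{t₁}u₂ − ∂_{t₂}u₁ + [u₂, u₁] = 0 hold, and consequently the nonlinear Schrödinger system holds: ∂_{t₁}u − 2f = 0, ∂_{t₁}v + 2g = 0, ∂_{t₁}f − ∂_{t₂}u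 − u²v = 0, and ∂_{t₁}g − ∂_{t₂}v + uv² = 0. (This is the derivation of the nonlinear Schrödinger equation (4.17) of the paper from the Zakharov–Shabat system (4.9) with m = 1, n = 2.) -/
noncomputable section

attribute [local instance] Matrix.normedAddCommGroup Matrix.normedSpace

/-- The Pauli matrix `σ₃ = diag(1, -1)`. -/
def sigma3 : Matrix (Fin 2) (Fin 2) ℂ := !![1, 0; 0, -1]

/-- Matrix partial derivative in the first variable `t₁`. -/
def pdT1 (F : ℝ × ℝ → Matrix (Fin 2) (Fin 2) ℂ) (p : ℝ × ℝ) :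
    Matrix (Fin 2) (Fin 2) ℂ :=
  fderiv ℝ F p (1, 0)

/-- Matrix partial derivative in the second variable `t₂`. -/
def pdT2 (F : ℝ × ℝ → Matrix (Fin 2) (Fin 2) ℂ) (p : ℝ × ℝ) :
    Matrix (Fin 2) (Fin 2) ℂ :=
  fderiv ℝ F p (0, 1)

/-- The matrix `u₁ = [[0,u],[v,0]]`. -/
def u1mat (u v : ℝ × ℝ → ℂ) (p : ℝ × ℝ) : Matrix (Fin 2) (Fin 2) ℂ :=
  !![0, u p; v p, 0]

/-- The matrix `u₂ = [[-uv/2,f],[g,uv/2]]`. -/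
def u2mat (u v f g : ℝ × ℝ → ℂ) (p : ℝ × ℝ) : Matrix (Fin 2) (Fin 2) ℂ :=
  !![-(u p * v p) / 2, f p; g p, u p * v p / 2]

/-- `B₁(λ) = u₁ + σ₃λ`. -/
def B1mat (u v : ℝ × ℝ → ℂ) (p : ℝ × ℝ) (lam : ℝ) : Matrix (Fin 2) (Fin 2) ℂ :=
  u1mat u v p + (lam : ℂ) • sigma3

/-- `B₂(λ) = u₂ + u₁λ + σ₃λ²`. -/
def B2mat (u v f g : ℝ × ℝ → ℂ) (p : ℝ × ℝ) (lam : ℝ) :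
    Matrix (Fin 2) (Fin 2) ℂ :=
  u2mat u v f g p + (lam : ℂ) • u1mat u v p + ((lam : ℂ)) ^ 2 • sigma3

lemma mat2_smul_decomp (a b c d : ℂ) :
    (!![a,b;c,d] : Matrix (Fin 2) (Fin 2) ℂ) =
      a • !![1,0;0,0] + b • !![0,1;0,0] + c • !![0,0;1,0] + d • !![0,0;0,1] := by
  ext i j
  fin_cases i <;> fin_cases j <;> simp

lemma hasFDerivAt_mat2 {a b c d : ℝ × ℝ → ℂ} {a' b' c' d' : (ℝ × ℝ) →L[ℝ] ℂ} {p : ℝ × ℝ}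
    (ha : HasFDerivAt a a' p) (hb : HasFDerivAt b b' p)
    (hc : HasFDerivAt c c' p) (hd : HasFDerivAt d d' p) :
    HasFDerivAt (fun q => (!![a q, b q; c q, d q] : Matrix (Fin 2) (Fin 2) ℂ))
      (a'.smulRight !![1,0;0,0] + b'.smulRight !![0,1;0,0] +
        c'.smulRight !![0,0;1,0] + d'.smulRight !![0,0;0,1]) p := by
  have h : (fun q => (!![a q, b q; c q, d q] : Matrix (Fin 2) (Fin 2) ℂ)) =
      fun q => a q • !![1,0;0,0] + b q • !![0,1;0,0] + c q • !![0,0;1,0] + d q • !![0,0;0,1] := by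
    funext q; exact mat2_smul_decomp _ _ _ _
  rw [h]
  exact (((ha.smul_const _).add (hb.smul_const _)).add (hc.smul_const _)).add (hd.smul_const _)

lemma fderiv_mat2_apply {a b c d : ℝ × ℝ → ℂ} {a' b' c' d' : (ℝ × ℝ) →L[ℝ] ℂ} {p : ℝ × ℝ}
    (ha : HasFDerivAt a a' p) (hb : HasFDerivAt b b' p)
    (hc : HasFDerivAt c c' p) (hd : HasFDerivAt d d' p) (w : ℝ × ℝ) :
    fderiv ℝ (fun q => (!![a q, b q; c q, d q] : Matrix (Fin 2) (Fin 2) ℂ)) p w =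
      !![a' w, b' w; c' w, d' w] := by
  rw [(hasFDerivAt_mat2 ha hb hc hd).fderiv]
  simp only [ContinuousLinearMap.add_apply, ContinuousLinearMap.smulRight_apply]
  exact (mat2_smul_decomp _ _ _ _).symm

set_option maxHeartbeats 1000000 in
/-- the nonlinear Schrödinger system (4.17) of the paper.
If `∂_{t₁}B₂(λ) - ∂_{t₂}B₁(λ) + [B₂(λ), B₁(λ)] = 0` for all real `λ`, then
`∂_{t₁}u₁ + [u₂, σ₃] = 0`, `∂_{t₁}u₂ - ∂_{t₂}u₁ + [u₂, u₁] = 0`, and the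
scalar nonlinear Schrödinger system holds. -/
theorem nonlinear_schroedinger_system
    (Ω : Set (ℝ × ℝ)) (hΩopen : IsOpen Ω)
    (u v f g : ℝ × ℝ → ℂ)
    (hdu : ∀ p ∈ Ω, DifferentiableAt ℝ u p)
    (hdv : ∀ p ∈ Ω, DifferentiableAt ℝ v p)
    (hdf : ∀ p ∈ Ω, DifferentiableAt ℝ f p)
    (hdg : ∀ p ∈ Ω, DifferentiableAt ℝ g p)
    (hZS : ∀ p ∈ Ω, ∀ lam : ℝ,
      pdT1 (fun q => B2mat u v f g q lam) p -
        pdT2 (fun q => B1mat u v q lam) p +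
        matComm (B2mat u v f g p lam) (B1mat u v p lam) = 0) :
    ∀ p ∈ Ω,
      (pdT1 (u1mat u v) p + matComm (u2mat u v f g p) sigma3 = 0) ∧
      (pdT1 (u2mat u v f g) p - pdT2 (u1mat u v) p +
        matComm (u2mat u v f g p) (u1mat u v p) = 0) ∧
      fderiv ℝ u p (1, 0) - 2 * f p = 0 ∧
      fderiv ℝ v p (1, 0) + 2 * g p = 0 ∧
      fderiv ℝ f p (1, 0) - fderiv ℝ u p (0, 1) - (u p) ^ 2 * v p = 0 ∧
      fderiv ℝ g p (1, 0) - fderiv ℝ v p (0, 1) + u p * (v p) ^ 2 = 0 := by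
  intro p hp
  have hu : HasFDerivAt u (fderiv ℝ u p) p := (hdu p hp).hasFDerivAt
  have hv : HasFDerivAt v (fderiv ℝ v p) p := (hdv p hp).hasFDerivAt
  have hf : HasFDerivAt f (fderiv ℝ f p) p := (hdf p hp).hasFDerivAt
  have hg : HasFDerivAt g (fderiv ℝ g p) p := (hdg p hp).hasFDerivAt
  set U := fderiv ℝ u p with hU
  set V := fderiv ℝ v p with hV
  set F := fderiv ℝ f p with hF
  set G := fderiv ℝ g p with hG
  have huv : HasFDerivAt (fun q => u q * v q) (u p • V + v p • U) p := hu.mul hv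
  -- scalar consequences of the Zakharov–Shabat equation, polynomial in λ
  have key : ∀ lam : ℝ,
      ((-(1/2):ℂ) * (u p * V (1,0) + v p * U (1,0)) + (f p * v p - g p * u p) = 0) ∧
      (F (1,0) + (lam:ℂ) * U (1,0) - U (0,1) - (u p)^2 * v p - 2*(lam:ℂ)*(f p) = 0) ∧
      (G (1,0) + (lam:ℂ) * V (1,0) - V (0,1) + u p * (v p)^2 + 2*(lam:ℂ)*(g p) = 0) := by
    intro lam
    have hA2 : HasFDerivAt (fun q => (-(1/2):ℂ) * (u q * v q) + ((lam:ℂ))^2)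
        ((-(1/2):ℂ) • (u p • V + v p • U)) p := (huv.const_mul _).add_const _
    have hB2e : HasFDerivAt (fun q => f q + (lam:ℂ) * u q) (F + (lam:ℂ) • U) p :=
      hf.add (hu.const_mul _)
    have hC2 : HasFDerivAt (fun q => g q + (lam:ℂ) * v q) (G + (lam:ℂ) • V) p :=
      hg.add (hv.const_mul _)
    have hD2 : HasFDerivAt (fun q => ((1/2):ℂ) * (u q * v q) + (-((lam:ℂ))^2))
        (((1/2):ℂ) • (u p • V + v p • U)) p := (huv.const_mul _).add_const _
    have hB2fun : (fun q => B2mat u v f g q lam) = fun q =>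
        (!![(-(1/2):ℂ) * (u q * v q) + ((lam:ℂ))^2, f q + (lam:ℂ) * u q;
            g q + (lam:ℂ) * v q, ((1/2):ℂ) * (u q * v q) + (-((lam:ℂ))^2)]
          : Matrix (Fin 2) (Fin 2) ℂ) := by
      funext q
      unfold B2mat u2mat u1mat sigma3
      ext i j
      fin_cases i <;> fin_cases j <;> simp <;> ring
    have hB1fun : (fun q => B1mat u v q lam) = fun q =>
        (!![((lam:ℂ)), u q; v q, (-(lam:ℂ))] : Matrix (Fin 2) (Fin 2) ℂ) := by
      funext q
      unfold B1mat u1mat sigma3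
      ext i j
      fin_cases i <;> fin_cases j <;> simp
    have h := hZS p hp lam
    unfold pdT1 pdT2 at h
    rw [hB2fun, hB1fun, fderiv_mat2_apply hA2 hB2e hC2 hD2 (1,0),
      fderiv_mat2_apply (hasFDerivAt_const ((lam:ℂ)) p) hu hv
        (hasFDerivAt_const (-(lam:ℂ)) p) (0,1),
      congrFun hB2fun p, congrFun hB1fun p] at h
    have e00 := congrArg (fun M : Matrix (Fin 2) (Fin 2) ℂ => M 0 0) h
    have e01 := congrArg (fun M : Matrix (Fin 2) (Fin 2) ℂ => M 0 1) h
    have e10 := congrArg (fun M : Matrix (Fin 2) (Fin 2) ℂ => M 1 0) h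
    simp [matComm, Matrix.sub_apply, Matrix.add_apply, Matrix.mul_apply,
      Fin.sum_univ_two, ContinuousLinearMap.add_apply, ContinuousLinearMap.smul_apply,
      ContinuousLinearMap.zero_apply, smul_eq_mul] at e00
    simp [matComm, Matrix.sub_apply, Matrix.add_apply, Matrix.mul_apply,
      Fin.sum_univ_two, ContinuousLinearMap.add_apply, ContinuousLinearMap.smul_apply,
      ContinuousLinearMap.zero_apply, smul_eq_mul] at e01
    simp [matComm, Matrix.sub_apply, Matrix.add_apply, Matrix.mul_apply,
      Fin.sum_univ_two, ContinuousLinearMap.add_apply, ContinuousLinearMap.smul_apply,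
      ContinuousLinearMap.zero_apply, smul_eq_mul] at e10
    exact ⟨by linear_combination e00, by linear_combination e01, by linear_combination e10⟩
  obtain ⟨h00, h010, h100⟩ := key 0
  obtain ⟨-, h011, h101⟩ := key 1
  push_cast at h010 h100 h011 h101
  have equ : U (1,0) - 2 * f p = 0 := by linear_combination h011 - h010
  have eqv : V (1,0) + 2 * g p = 0 := by linear_combination h101 - h100
  have eqf : F (1,0) - U (0,1) - (u p)^2 * v p = 0 := by linear_combination h010
  have eqg : G (1,0) - V (0,1) + u p * (v p)^2 = 0 := by linear_combination h100
  refine ⟨?_, ?_, equ, eqv, eqf, eqg⟩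
  · rw [show pdT1 (u1mat u v) p =
        fderiv ℝ (fun q => (!![0, u q; v q, 0] : Matrix (Fin 2) (Fin 2) ℂ)) p (1,0) from rfl,
      fderiv_mat2_apply (hasFDerivAt_const (0:ℂ) p) hu hv (hasFDerivAt_const (0:ℂ) p) (1,0)]
    ext i j
    fin_cases i <;> fin_cases j <;>
      simp [matComm, u2mat, sigma3, Matrix.mul_apply, Fin.sum_univ_two,
        Matrix.sub_apply, Matrix.add_apply] <;>
      first
        | linear_combination equ
        | linear_combination eqv
        | ring1
  · have hA : HasFDerivAt (fun q => -(u q * v q) / 2) ((-(1/2):ℂ) • (u p • V + v p • U)) p := by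
      have h1 : (fun q => -(u q * v q) / 2) = fun q => (-(1/2):ℂ) * (u q * v q) := by
        funext q; ring
      rw [h1]; exact huv.const_mul _
    have hD : HasFDerivAt (fun q => u q * v q / 2) (((1/2):ℂ) • (u p • V + v p • U)) p := by
      have h1 : (fun q => u q * v q / 2) = fun q => ((1/2):ℂ) * (u q * v q) := by
        funext q; ring
      rw [h1]; exact huv.const_mul _
    rw [show pdT1 (u2mat u v f g) p =
        fderiv ℝ (fun q => (!![-(u q * v q) / 2, f q; g q, u q * v q / 2]
          : Matrix (Fin 2) (Fin 2) ℂ)) p (1,0) from rfl,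
      fderiv_mat2_apply hA hf hg hD (1,0),
      show pdT2 (u1mat u v) p =
        fderiv ℝ (fun q => (!![0, u q; v q, 0] : Matrix (Fin 2) (Fin 2) ℂ)) p (0,1) from rfl,
      fderiv_mat2_apply (hasFDerivAt_const (0:ℂ) p) hu hv (hasFDerivAt_const (0:ℂ) p) (0,1)]
    ext i j
    fin_cases i <;> fin_cases j <;>
      simp [matComm, u2mat, u1mat, Matrix.mul_apply, Fin.sum_univ_two,
        Matrix.sub_apply, Matrix.add_apply, ContinuousLinearMap.add_apply,
        ContinuousLinearMap.smul_apply, smul_eq_mul] <;>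
      first
        | linear_combination h00
        | linear_combination -h00
        | linear_combination eqf
        | linear_combination eqg
        | ring1
end
end

section
/- Fix integers l ≥ 1, K ≥ 1 and an index n ∈ {1, …, l}. Fix distinct real numbers a_m (m ∈ {1,…,l}, m ≠ n) none of which equals 0 or 1, and let I ⊆ ℝ be an open interval avoiding 0, 1 and all a_m. Let P, Q, R₁, …, R_l, T₀, …, T_{K−1} : I → M₂ be differentiable matrix functions of s (where s plays the role of a_n). Define A(λ, s) := P(s)/λ + Q(s)/(λ−1) + Σ_{m≠n} R_m(s)/(λ−a_m) + R_n(s)/(λ−s) + Σ_{k=0}^{K−1} T_k(s)λᵏ and C(λ, s) := −R_n(s)/(λ−s). Suppose that for every s ∈ I and every real λ ∉ {0, 1, s} ∪ {a_m : m ≠ n}, the equation ∂_s A(λ,s) − ∂_λ C(λ,s) + [A(λ,s), C(λ,s)] = 0 holds. Then for every s ∈ I: P′ + [P/s, R_n] = 0; Q′ + [Q/(s−1), R_n] = 0; R_m′ + [R_m/(s−a_m), R_n] = 0 for each m ≠ n; R_n′ − [ P/s + Q/(s−1) + Σ_{m≠n} R_m/(s−a_m) + Σ_{k=0}^{K−1}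 sᵏT_k, R_n ] = 0; and T_k′ − [ Σ_{l=k+1}^{K−1} s^{l−k−1}T_l, R_n ] = 0 for each 0 ≤ k ≤ K−1. (This is the system (3.23) of the paper, whose reduction T_k ≡ 0 is the Schlesinger system, from which the sixth Painlevé equation is obtained.) -/
noncomputable section

attribute [local instance] Matrix.normedAddCommGroup Matrix.normedSpace

/-- The coefficient matrix (3.20) of the paper:
`A(λ,s) = P/λ + Q/(λ-1) + Σ_{m≠n} R_m/(λ-a_m) + R_n/(λ-s) + Σ_k T_k λᵏ`. -/
def Amat (l K : ℕ) (n : Fin l) (a : Fin l → ℝ)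
    (P Q : ℝ → Matrix (Fin 2) (Fin 2) ℂ)
    (R : Fin l → ℝ → Matrix (Fin 2) (Fin 2) ℂ)
    (T : ℕ → ℝ → Matrix (Fin 2) (Fin 2) ℂ)
    (s lam : ℝ) : Matrix (Fin 2) (Fin 2) ℂ :=
  (lam : ℂ)⁻¹ • P s + ((lam - 1 : ℝ) : ℂ)⁻¹ • Q s +
    (∑ m ∈ Finset.univ.erase n, ((lam - a m : ℝ) : ℂ)⁻¹ • R m s) +
    ((lam - s : ℝ) : ℂ)⁻¹ • R n s +
    ∑ k ∈ Finset.range K, (lam : ℂ) ^ k • T k s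

/-- The matrix `C(λ,s) = -R_n/(λ-s)` of equation (2.26) of the paper. -/
def Cmat (l : ℕ) (n : Fin l) (R : Fin l → ℝ → Matrix (Fin 2) (Fin 2) ℂ)
    (s lam : ℝ) : Matrix (Fin 2) (Fin 2) ℂ :=
  -(((lam - s : ℝ) : ℂ)⁻¹ • R n s)

abbrev M2 := Matrix (Fin 2) (Fin 2) ℂ
open Filter Topology

lemma matComm_add_left (X Y Z : M2) : matComm (X + Y) Z = matComm X Z + matComm Y Z := by
  simp only [matComm, add_mul, mul_add]; abel

lemma matComm_smul_left (c : ℂ) (X Y : M2) : matComm (c • X) Y = c • matComm X Y := by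
  simp only [matComm, Matrix.smul_mul, Matrix.mul_smul, smul_sub]

lemma matComm_sum_left {ι : Type*} (t : Finset ι) (f : ι → M2) (Z : M2) :
    matComm (∑ i ∈ t, f i) Z = ∑ i ∈ t, matComm (f i) Z := by
  simp only [matComm, Finset.sum_mul, Finset.mul_sum, Finset.sum_sub_distrib]

lemma matComm_neg_right (X Y : M2) : matComm X (-Y) = -matComm X Y := by
  simp only [matComm, mul_neg, neg_mul]; abel

lemma matComm_smul_right (c : ℂ) (X Y : M2) : matComm X (c • Y) = c • matComm X Y := by
  simp only [matComm, Matrix.smul_mul, Matrix.mul_smul, smul_sub]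

lemma matComm_self (X : M2) : matComm X X = 0 := by
  simp only [matComm, sub_self]

lemma triangle_swap {M : Type*} [AddCommMonoid M] (K : ℕ) (f : ℕ → ℕ → M) :
    ∑ k ∈ Finset.range K, ∑ i ∈ Finset.range k, f i k
      = ∑ i ∈ Finset.range K, ∑ k ∈ Finset.Ico (i + 1) K, f i k := by
  induction K with
  | zero => simp
  | succ K ih =>
    rw [Finset.sum_range_succ, ih,
      Finset.sum_range_succ (f := fun i => ∑ k ∈ Finset.Ico (i + 1) (K + 1), f i k)]
    have h0 : ∑ k ∈ Finset.Ico (K + 1) (K + 1), f K k = 0 := by simp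
    have h1 : ∀ i ∈ Finset.range K,
        ∑ k ∈ Finset.Ico (i + 1) (K + 1), f i k
          = (∑ k ∈ Finset.Ico (i + 1) K, f i k) + f i K := fun i hi =>
      Finset.sum_Ico_succ_top (Nat.succ_le_of_lt (Finset.mem_range.mp hi)) _
    rw [Finset.sum_congr rfl h1, Finset.sum_add_distrib, h0, add_zero]

lemma scalar_pf' {x s b : ℂ} (hxs : x ≠ s) (hxb : x ≠ b) (hsb : s ≠ b) :
    (x - b)⁻¹ * (s - b)⁻¹ = (x - s)⁻¹ * (s - b)⁻¹ - (x - s)⁻¹ * (x - b)⁻¹ := by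
  have h1 : x - s ≠ 0 := sub_ne_zero.2 hxs
  have h2 : x - b ≠ 0 := sub_ne_zero.2 hxb
  have h3 : s - b ≠ 0 := sub_ne_zero.2 hsb
  field_simp
  ring

lemma scalar_geom {x s : ℂ} (hxs : x ≠ s) (k : ℕ) :
    (x - s)⁻¹ * x ^ k = (x - s)⁻¹ * s ^ k + ∑ i ∈ Finset.range k, x ^ i * s ^ (k - i - 1) := by
  have h1 : x - s ≠ 0 := sub_ne_zero.2 hxs
  have h := geom_sum₂_mul x s k
  have hsum : ∑ i ∈ Finset.range k, x ^ i * s ^ (k - 1 - i)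
      = ∑ i ∈ Finset.range k, x ^ i * s ^ (k - i - 1) :=
    Finset.sum_congr rfl fun i _ => by rw [Nat.sub_right_comm]
  rw [hsum] at h
  field_simp
  linear_combination -h

lemma nhdsWithin_compl_neBot (B : Finset ℝ) (b : ℝ) : (𝓝[(↑B : Set ℝ)ᶜ] b).NeBot := by
  have hd : Dense (↑B : Set ℝ)ᶜ := Set.Countable.dense_compl ℝ B.finite_toSet.countable
  exact mem_closure_iff_nhdsWithin_neBot.mp (hd b)

lemma pole_extract {B : Finset ℝ} {b : ℝ} (hb : b ∈ B) {E : M2} {g : ℝ → M2}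
    (hg : ContinuousAt g b)
    (h : ∀ x : ℝ, x ∉ B → ((x : ℂ) - (b : ℂ))⁻¹ • E + g x = 0) : E = 0 := by
  have hne : (𝓝[(↑B : Set ℝ)ᶜ] b).NeBot := nhdsWithin_compl_neBot B b
  have hmem : ∀ᶠ x in 𝓝[(↑B : Set ℝ)ᶜ] b, x ∈ (↑B : Set ℝ)ᶜ := self_mem_nhdsWithin
  set f : ℝ → M2 := fun x => ((x : ℂ) - (b : ℂ)) • (((x : ℂ) - (b : ℂ))⁻¹ • E + g x) with hf
  have h1 : Tendsto f (𝓝[(↑B : Set ℝ)ᶜ] b) (𝓝 E) := by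
    have hEq : (fun x : ℝ => E + ((x : ℂ) - (b : ℂ)) • g x) =ᶠ[𝓝[(↑B : Set ℝ)ᶜ] b] f := by
      filter_upwards [hmem] with x hx
      have hxb : x ≠ b := fun hxb => hx (by simpa [hxb] using hb)
      have hxb' : (x : ℂ) - (b : ℂ) ≠ 0 := by
        simpa [sub_ne_zero] using (fun hc => hxb (by exact_mod_cast hc))
      simp [hf, smul_add, smul_smul, mul_inv_cancel₀ hxb']
    refine Tendsto.congr' hEq ?_
    have h2 : Tendsto (fun x : ℝ => ((x : ℂ) - (b : ℂ)) • g x) (𝓝[(↑B : Set ℝ)ᶜ] b) (𝓝 0) := by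
      have hc : Tendsto (fun x : ℝ => ((x : ℂ) - (b : ℂ))) (𝓝 b) (𝓝 0) := by
        have hca : ContinuousAt (fun x : ℝ => ((x : ℂ) - (b : ℂ))) b :=
          (Complex.continuous_ofReal.continuousAt).sub continuousAt_const
        simpa using hca.tendsto
      simpa using (hc.smul hg).mono_left nhdsWithin_le_nhds
    simpa using tendsto_const_nhds.add h2
  have h0 : Tendsto f (𝓝[(↑B : Set ℝ)ᶜ] b) (𝓝 0) := by
    refine Tendsto.congr' ?_ tendsto_const_nhds
    filter_upwards [hmem] with x hx
    simp only [hf]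
    rw [h x hx, smul_zero]
  exact tendsto_nhds_unique h1 h0

lemma poly_extract (K : ℕ) (F : ℕ → M2) (B : Finset ℝ)
    (h : ∀ x : ℝ, x ∉ B → ∑ k ∈ Finset.range K, ((x : ℂ)) ^ k • F k = 0) :
    ∀ k < K, F k = 0 := by
  intro k hk
  ext i j
  set p : Polynomial ℂ := ∑ k ∈ Finset.range K, Polynomial.C (F k i j) * Polynomial.X ^ k with hp
  have hroot : ∀ x : ℝ, x ∉ B → p.IsRoot (x : ℂ) := by
    intro x hx
    have h1 : (∑ k ∈ Finset.range K, ((x : ℂ)) ^ k • F k) i j = 0 := by rw [h x hx]; rfl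
    have h2 : ∑ k ∈ Finset.range K, ((x : ℂ)) ^ k * F k i j = 0 := by
      simpa [Matrix.sum_apply, Matrix.smul_apply, smul_eq_mul] using h1
    simp only [hp, Polynomial.IsRoot, Polynomial.eval_finset_sum, Polynomial.eval_mul,
      Polynomial.eval_C, Polynomial.eval_pow, Polynomial.eval_X]
    rw [← h2]
    exact Finset.sum_congr rfl fun k _ => mul_comm _ _
  have hinf : {x : ℂ | p.IsRoot x}.Infinite := by
    have hBc : ((↑B : Set ℝ)ᶜ).Infinite := B.finite_toSet.infinite_compl
    have himg : ((fun x : ℝ => (x : ℂ)) '' ((↑B : Set ℝ)ᶜ)).Infinite :=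
      hBc.image (Complex.ofReal_injective.injOn)
    refine himg.mono ?_
    rintro z ⟨x, hx, rfl⟩
    exact hroot x hx
  have hp0 : p = 0 := Polynomial.eq_zero_of_infinite_isRoot p hinf
  have hcoeff := congrArg (fun q => Polynomial.coeff q k) hp0
  simpa [hp, Polynomial.finset_sum_coeff, Polynomial.coeff_C_mul, Polynomial.coeff_X_pow,
    Finset.sum_ite_eq', hk] using hcoeff

lemma contAt_poleterm (cc : ℂ) (V : M2) {b : ℝ} (h : (b : ℂ) ≠ cc) :
    ContinuousAt (fun x : ℝ => ((x : ℂ) - cc)⁻¹ • V) b :=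
  (((Complex.continuous_ofReal.continuousAt).sub continuousAt_const).inv₀
    (sub_ne_zero.2 h)).smul continuousAt_const

lemma contAt_polysum (K : ℕ) (G : ℕ → M2) (b : ℝ) :
    ContinuousAt (fun x : ℝ => ∑ k ∈ Finset.range K, ((x : ℂ)) ^ k • G k) b :=
  tendsto_finset_sum _ fun k _ =>
    ((Complex.continuous_ofReal.continuousAt).pow k).smul continuousAt_const

lemma contAt_sumpole {ι : Type*} (t : Finset ι) (cc : ι → ℂ) (V : ι → M2) {b : ℝ}
    (h : ∀ i ∈ t, (b : ℂ) ≠ cc i) :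
    ContinuousAt (fun x : ℝ => ∑ i ∈ t, ((x : ℂ) - cc i)⁻¹ • V i) b :=
  tendsto_finset_sum _ fun i hi => contAt_poleterm (cc i) (V i) (h i hi)


/-- the system (3.23) of the paper, whose reduction is the
Schlesinger system yielding the sixth Painlevé equation. -/
theorem extended_schlesinger_system
    (l K : ℕ) (hl : 1 ≤ l) (hK : 1 ≤ K) (n : Fin l) (a : Fin l → ℝ)
    (hdist : ∀ m m' : Fin l, m ≠ n → m' ≠ n → m ≠ m' → a m ≠ a m')
    (ha0 : ∀ m, m ≠ n → a m ≠ 0) (ha1 : ∀ m, m ≠ n → a m ≠ 1)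
    (c d : ℝ)
    (hI0 : (0 : ℝ) ∉ Set.Ioo c d) (hI1 : (1 : ℝ) ∉ Set.Ioo c d)
    (hIa : ∀ m, m ≠ n → a m ∉ Set.Ioo c d)
    (P Q : ℝ → Matrix (Fin 2) (Fin 2) ℂ)
    (R : Fin l → ℝ → Matrix (Fin 2) (Fin 2) ℂ)
    (T : ℕ → ℝ → Matrix (Fin 2) (Fin 2) ℂ)
    (hdP : ∀ s ∈ Set.Ioo c d, DifferentiableAt ℝ P s)
    (hdQ : ∀ s ∈ Set.Ioo c d, DifferentiableAt ℝ Q s)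
    (hdR : ∀ m : Fin l, ∀ s ∈ Set.Ioo c d, DifferentiableAt ℝ (R m) s)
    (hdT : ∀ k < K, ∀ s ∈ Set.Ioo c d, DifferentiableAt ℝ (T k) s)
    (hZS : ∀ s ∈ Set.Ioo c d, ∀ lam : ℝ, lam ≠ 0 → lam ≠ 1 → lam ≠ s →
      (∀ m, m ≠ n → lam ≠ a m) →
      deriv (fun σ' => Amat l K n a P Q R T σ' lam) s -
        deriv (fun μ => Cmat l n R s μ) lam +
        matComm (Amat l K n a P Q R T s lam) (Cmat l n R s lam) = 0) :
    ∀ s ∈ Set.Ioo c d,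
      (deriv P s + matComm ((s : ℂ)⁻¹ • P s) (R n s) = 0) ∧
      (deriv Q s + matComm (((s - 1 : ℝ) : ℂ)⁻¹ • Q s) (R n s) = 0) ∧
      (∀ m : Fin l, m ≠ n →
        deriv (R m) s +
          matComm (((s - a m : ℝ) : ℂ)⁻¹ • R m s) (R n s) = 0) ∧
      (deriv (R n) s -
        matComm
          ((s : ℂ)⁻¹ • P s + ((s - 1 : ℝ) : ℂ)⁻¹ • Q s +
            (∑ m ∈ Finset.univ.erase n, ((s - a m : ℝ) : ℂ)⁻¹ • R m s) +
            ∑ k ∈ Finset.range K, (s : ℂ) ^ k • T k s)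
          (R n s) = 0) ∧
      (∀ k < K,
        deriv (T k) s -
          matComm (∑ j ∈ Finset.Ico (k + 1) K, ((s : ℂ)) ^ (j - k - 1) • T j s)
            (R n s) = 0) := by
  intro s hs
  classical
  have hs0 : s ≠ 0 := fun h => hI0 (h ▸ hs)
  have hs1 : s ≠ 1 := fun h => hI1 (h ▸ hs)
  have hsa : ∀ m, m ≠ n → s ≠ a m := fun m hm h => hIa m hm (h ▸ hs)
  set B : Finset ℝ :=
    insert 0 (insert 1 (insert s (Finset.image a (Finset.univ.erase n)))) with hB
  -- derivative of Amat in s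
  have hid : ∀ x : ℝ, HasDerivAt (fun σ' : ℝ => (σ' : ℂ)) 1 x := by
    intro x
    exact Complex.ofRealCLM.hasDerivAt
  have hA : ∀ lam : ℝ, lam ≠ s →
      deriv (fun σ' => Amat l K n a P Q R T σ' lam) s
        = (lam : ℂ)⁻¹ • deriv P s + ((lam - 1 : ℝ) : ℂ)⁻¹ • deriv Q s
          + (∑ m ∈ Finset.univ.erase n, ((lam - a m : ℝ) : ℂ)⁻¹ • deriv (R m) s)
          + (((lam - s : ℝ) : ℂ)⁻¹ • deriv (R n) s
              + ((((lam : ℂ) - (s : ℂ)) ^ 2)⁻¹ • R n s))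
          + ∑ k ∈ Finset.range K, (lam : ℂ) ^ k • deriv (T k) s := by
    intro lam hls
    have hls' : (lam : ℂ) - (s : ℂ) ≠ 0 := sub_ne_zero.2 (by exact_mod_cast hls)
    have h1 : HasDerivAt (fun σ' : ℝ => (lam : ℂ)⁻¹ • P σ') ((lam : ℂ)⁻¹ • deriv P s) s :=
      ((hdP s hs).hasDerivAt).const_smul ((lam : ℂ)⁻¹)
    have h2 : HasDerivAt (fun σ' : ℝ => ((lam - 1 : ℝ) : ℂ)⁻¹ • Q σ')
        (((lam - 1 : ℝ) : ℂ)⁻¹ • deriv Q s) s := ((hdQ s hs).hasDerivAt).const_smul (((lam - 1 : ℝ) : ℂ)⁻¹)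
    have h3 : HasDerivAt
        (fun σ' : ℝ => ∑ m ∈ Finset.univ.erase n, ((lam - a m : ℝ) : ℂ)⁻¹ • R m σ')
        (∑ m ∈ Finset.univ.erase n, ((lam - a m : ℝ) : ℂ)⁻¹ • deriv (R m) s) s :=
      HasDerivAt.fun_sum fun m _ => ((hdR m s hs).hasDerivAt).const_smul (((lam - a m : ℝ) : ℂ)⁻¹)
    have h5 : HasDerivAt
        (fun σ' : ℝ => ∑ k ∈ Finset.range K, (lam : ℂ) ^ k • T k σ')
        (∑ k ∈ Finset.range K, (lam : ℂ) ^ k • deriv (T k) s) s :=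
      HasDerivAt.fun_sum fun k hk =>
        ((hdT k (Finset.mem_range.mp hk) s hs).hasDerivAt).const_smul ((lam : ℂ) ^ k)
    have hc0 : HasDerivAt (fun σ' : ℝ => ((lam - σ' : ℝ) : ℂ)) (-1) s := by
      have hfun : (fun σ' : ℝ => ((lam - σ' : ℝ) : ℂ)) = fun σ' : ℝ => (lam : ℂ) - (σ' : ℂ) := by
        funext σ'; push_cast; ring
      rw [hfun]
      exact (hid s).const_sub _
    have hcinv : HasDerivAt (fun σ' : ℝ => ((lam - σ' : ℝ) : ℂ)⁻¹)
        ((((lam : ℂ) - (s : ℂ)) ^ 2)⁻¹) s := by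
      have hg : HasDerivAt (fun y : ℂ => y⁻¹) (-((((lam - s : ℝ) : ℂ)) ^ 2)⁻¹)
          ((fun σ' : ℝ => ((lam - σ' : ℝ) : ℂ)) s) :=
        hasDerivAt_inv (by push_cast; exact hls')
      have h := HasDerivAt.scomp (x := s) (g₁ := fun y : ℂ => y⁻¹)
        (h := fun σ' : ℝ => ((lam - σ' : ℝ) : ℂ)) hg hc0
      have hfun : (fun y : ℂ => y⁻¹) ∘ (fun σ' : ℝ => ((lam - σ' : ℝ) : ℂ))
          = fun σ' : ℝ => ((lam - σ' : ℝ) : ℂ)⁻¹ := rfl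
      rw [hfun] at h
      refine h.congr_deriv ?_
      push_cast
      simp
    have h4 : HasDerivAt (fun σ' : ℝ => ((lam - σ' : ℝ) : ℂ)⁻¹ • R n σ')
        (((lam - s : ℝ) : ℂ)⁻¹ • deriv (R n) s
          + ((((lam : ℂ) - (s : ℂ)) ^ 2)⁻¹ • R n s)) s := by
      have := hcinv.smul ((hdR n s hs).hasDerivAt)
      exact this
    exact ((((h1.add h2).add h3).add h4).add h5).deriv
  have hC : ∀ lam : ℝ, lam ≠ s →
      deriv (fun μ => Cmat l n R s μ) lam = ((((lam : ℂ) - (s : ℂ)) ^ 2)⁻¹) • R n s := by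
    intro lam hls
    have hls' : (lam : ℂ) - (s : ℂ) ≠ 0 := sub_ne_zero.2 (by exact_mod_cast hls)
    have hc0 : HasDerivAt (fun μ : ℝ => ((μ - s : ℝ) : ℂ)) 1 lam := by
      have hfun : (fun μ : ℝ => ((μ - s : ℝ) : ℂ)) = fun μ : ℝ => (μ : ℂ) - (s : ℂ) := by
        funext μ; push_cast; ring
      rw [hfun]
      exact (hid lam).sub_const _
    have hcinv : HasDerivAt (fun μ : ℝ => ((μ - s : ℝ) : ℂ)⁻¹)
        (-((((lam : ℂ) - (s : ℂ)) ^ 2)⁻¹)) lam := by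
      have hg : HasDerivAt (fun y : ℂ => y⁻¹) (-((((lam - s : ℝ) : ℂ)) ^ 2)⁻¹)
          ((fun μ : ℝ => ((μ - s : ℝ) : ℂ)) lam) :=
        hasDerivAt_inv (by push_cast; exact hls')
      have h := HasDerivAt.scomp (x := lam) (g₁ := fun y : ℂ => y⁻¹)
        (h := fun μ : ℝ => ((μ - s : ℝ) : ℂ)) hg hc0
      have hfun : (fun y : ℂ => y⁻¹) ∘ (fun μ : ℝ => ((μ - s : ℝ) : ℂ))
          = fun μ : ℝ => ((μ - s : ℝ) : ℂ)⁻¹ := rfl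
      rw [hfun] at h
      refine h.congr_deriv ?_
      push_cast
      simp
    have h6 : HasDerivAt (fun μ : ℝ => -(((μ - s : ℝ) : ℂ)⁻¹ • R n s))
        ((((lam : ℂ) - (s : ℂ)) ^ 2)⁻¹ • R n s) lam := by
      have := (hcinv.smul_const (R n s)).neg
      simp [Pi.neg_def] at this
      push_cast
      exact this
    exact h6.deriv
  -- complex ne facts
  have hs0' : (s : ℂ) ≠ 0 := by exact_mod_cast hs0
  have hs1' : (s : ℂ) ≠ 1 := by exact_mod_cast hs1
  have hsa' : ∀ m, m ≠ n → (s : ℂ) ≠ ((a m : ℝ) : ℂ) := fun m hm => by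
    exact_mod_cast hsa m hm
  set E0 : M2 := deriv P s + matComm ((s : ℂ)⁻¹ • P s) (R n s) with hE0def
  set E1 : M2 := deriv Q s + matComm (((s - 1 : ℝ) : ℂ)⁻¹ • Q s) (R n s) with hE1def
  set EM : Fin l → M2 := fun m =>
    deriv (R m) s + matComm (((s - a m : ℝ) : ℂ)⁻¹ • R m s) (R n s) with hEMdef
  set EN : M2 := deriv (R n) s -
      matComm
        ((s : ℂ)⁻¹ • P s + ((s - 1 : ℝ) : ℂ)⁻¹ • Q s +
          (∑ m ∈ Finset.univ.erase n, ((s - a m : ℝ) : ℂ)⁻¹ • R m s) +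
          ∑ k ∈ Finset.range K, (s : ℂ) ^ k • T k s)
        (R n s) with hENdef
  set F : ℕ → M2 := fun k =>
    deriv (T k) s -
      matComm (∑ j ∈ Finset.Ico (k + 1) K, ((s : ℂ)) ^ (j - k - 1) • T j s)
        (R n s) with hFdef
  have key : ∀ x : ℝ, x ∉ B →
      ((x : ℂ) - ((0 : ℝ) : ℂ))⁻¹ • E0 + ((x : ℂ) - ((1 : ℝ) : ℂ))⁻¹ • E1
      + (∑ m ∈ Finset.univ.erase n, ((x : ℂ) - ((a m : ℝ) : ℂ))⁻¹ • EM m)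
      + ((x : ℂ) - ((s : ℝ) : ℂ))⁻¹ • EN
      + (∑ k ∈ Finset.range K, (x : ℂ) ^ k • F k) = 0 := by
    intro x hx
    have hx0 : x ≠ 0 := fun h => hx (by simp [hB, h])
    have hx1 : x ≠ 1 := fun h => hx (by simp [hB, h])
    have hxs : x ≠ s := fun h => hx (by simp [hB, h])
    have hxa : ∀ m, m ≠ n → x ≠ a m := by
      intro m hm h
      refine hx ?_
      simp only [hB, Finset.mem_insert, Finset.mem_image, Finset.mem_erase]
      exact Or.inr (Or.inr (Or.inr ⟨m, ⟨hm, Finset.mem_univ m⟩, h.symm⟩))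
    have cx0 : (x : ℂ) ≠ 0 := by exact_mod_cast hx0
    have cx1 : (x : ℂ) - 1 ≠ 0 := sub_ne_zero.2 (by exact_mod_cast hx1)
    have cxs : (x : ℂ) - (s : ℂ) ≠ 0 := sub_ne_zero.2 (by exact_mod_cast hxs)
    have cs1 : (s : ℂ) - 1 ≠ 0 := sub_ne_zero.2 (by exact_mod_cast hs1)
    have h := hZS s hs x hx0 hx1 hxs hxa
    rw [hA x hxs, hC x hxs] at h
    simp only [Amat, Cmat] at h
    simp only [matComm_neg_right, matComm_smul_right, matComm_add_left, matComm_sum_left,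
      matComm_smul_left, matComm_self, smul_zero, add_zero] at h
    rw [hE0def, hE1def, hENdef]
    simp only [hEMdef, hFdef]
    simp only [matComm_add_left, matComm_sum_left, matComm_smul_left]
    push_cast at h ⊢
    simp only [smul_add, smul_sub, smul_smul, Finset.smul_sum, Finset.sum_add_distrib,
      Finset.sum_sub_distrib] at h ⊢
    have cxa : ∀ m ∈ Finset.univ.erase n, ((x : ℂ)) ≠ ((a m : ℝ) : ℂ) := fun m hm => by
      exact_mod_cast hxa m (Finset.mem_erase.mp hm).1
    have cxs0 : ((x : ℂ)) ≠ ((s : ℝ) : ℂ) := by exact_mod_cast hxs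
    have eqZ : ∑ m ∈ Finset.univ.erase n,
          (((x : ℂ) - ((a m : ℝ) : ℂ))⁻¹ * (((s : ℝ) : ℂ) - ((a m : ℝ) : ℂ))⁻¹)
            • matComm (R m s) (R n s)
        = (∑ m ∈ Finset.univ.erase n,
            (((x : ℂ) - ((s : ℝ) : ℂ))⁻¹ * (((s : ℝ) : ℂ) - ((a m : ℝ) : ℂ))⁻¹)
              • matComm (R m s) (R n s))
          - ∑ m ∈ Finset.univ.erase n,
            (((x : ℂ) - ((s : ℝ) : ℂ))⁻¹ * ((x : ℂ) - ((a m : ℝ) : ℂ))⁻¹)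
              • matComm (R m s) (R n s) := by
      rw [← Finset.sum_sub_distrib]
      refine Finset.sum_congr rfl fun m hm => ?_
      rw [← sub_smul]
      congr 1
      exact scalar_pf' cxs0 (cxa m hm) (hsa' m (Finset.mem_erase.mp hm).1)
    have eqW : ∑ k ∈ Finset.range K, ∑ j ∈ Finset.Ico (k + 1) K,
          ((x : ℂ) ^ k * ((s : ℝ) : ℂ) ^ (j - k - 1)) • matComm (T j s) (R n s)
        = (∑ k ∈ Finset.range K,
            (((x : ℂ) - ((s : ℝ) : ℂ))⁻¹ * (x : ℂ) ^ k) • matComm (T k s) (R n s))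
          - ∑ k ∈ Finset.range K,
            (((x : ℂ) - ((s : ℝ) : ℂ))⁻¹ * ((s : ℝ) : ℂ) ^ k) • matComm (T k s) (R n s) := by
      rw [← triangle_swap K
        (fun i k => ((x : ℂ) ^ i * ((s : ℝ) : ℂ) ^ (k - i - 1)) • matComm (T k s) (R n s)),
        ← Finset.sum_sub_distrib]
      refine Finset.sum_congr rfl fun k _ => ?_
      rw [← Finset.sum_smul, ← sub_smul]
      congr 1
      have hg := scalar_geom cxs0 k
      linear_combination -hg
    rw [eqZ, eqW, ← h]
    match_scalars <;> first
      | ring1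
      | (field_simp; ring1)
      | field_simp
  have hB0 : (0 : ℝ) ∈ B := by simp [hB]
  have hB1 : (1 : ℝ) ∈ B := by simp [hB]
  have hBs : s ∈ B := by simp [hB]
  have hBa : ∀ m, m ≠ n → a m ∈ B := by
    intro m hm
    simp only [hB, Finset.mem_insert, Finset.mem_image, Finset.mem_erase]
    exact Or.inr (Or.inr (Or.inr ⟨m, ⟨hm, Finset.mem_univ m⟩, rfl⟩))
  have hgE0 : E0 = 0 := by
    apply pole_extract (B := B) hB0 (g := fun x : ℝ =>
      ((x : ℂ) - ((1 : ℝ) : ℂ))⁻¹ • E1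
      + (∑ m ∈ Finset.univ.erase n, ((x : ℂ) - ((a m : ℝ) : ℂ))⁻¹ • EM m)
      + ((x : ℂ) - ((s : ℝ) : ℂ))⁻¹ • EN
      + (∑ k ∈ Finset.range K, (x : ℂ) ^ k • F k))
    · refine (((contAt_poleterm _ E1 ?_).add (contAt_sumpole _ _ _ ?_)).add
        (contAt_poleterm _ EN ?_)).add (contAt_polysum _ _ _)
      · norm_num
      · intro m hm
        have := ha0 m (Finset.mem_erase.mp hm).1
        exact_mod_cast (this ∘ Eq.symm)
      · exact_mod_cast (hs0 ∘ Eq.symm)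
    · intro x hx
      have hk := key x hx
      rw [← hk]; abel
  have hgE1 : E1 = 0 := by
    apply pole_extract (B := B) hB1 (g := fun x : ℝ =>
      ((x : ℂ) - ((0 : ℝ) : ℂ))⁻¹ • E0
      + (∑ m ∈ Finset.univ.erase n, ((x : ℂ) - ((a m : ℝ) : ℂ))⁻¹ • EM m)
      + ((x : ℂ) - ((s : ℝ) : ℂ))⁻¹ • EN
      + (∑ k ∈ Finset.range K, (x : ℂ) ^ k • F k))
    · refine (((contAt_poleterm _ E0 ?_).add (contAt_sumpole _ _ _ ?_)).add
        (contAt_poleterm _ EN ?_)).add (contAt_polysum _ _ _)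
      · norm_num
      · intro m hm
        have := ha1 m (Finset.mem_erase.mp hm).1
        exact_mod_cast (this ∘ Eq.symm)
      · exact_mod_cast (hs1 ∘ Eq.symm)
    · intro x hx
      have hk := key x hx
      rw [← hk]; abel
  have hgEM : ∀ m, m ≠ n → EM m = 0 := by
    intro m hm
    have hmE : m ∈ Finset.univ.erase n := Finset.mem_erase.mpr ⟨hm, Finset.mem_univ m⟩
    apply pole_extract (B := B) (hBa m hm) (g := fun x : ℝ =>
      ((x : ℂ) - ((0 : ℝ) : ℂ))⁻¹ • E0 + ((x : ℂ) - ((1 : ℝ) : ℂ))⁻¹ • E1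
      + (∑ m' ∈ (Finset.univ.erase n).erase m, ((x : ℂ) - ((a m' : ℝ) : ℂ))⁻¹ • EM m')
      + ((x : ℂ) - ((s : ℝ) : ℂ))⁻¹ • EN
      + (∑ k ∈ Finset.range K, (x : ℂ) ^ k • F k))
    · refine ((((contAt_poleterm _ E0 ?_).add (contAt_poleterm _ E1 ?_)).add
        (contAt_sumpole _ _ _ ?_)).add (contAt_poleterm _ EN ?_)).add (contAt_polysum _ _ _)
      · exact_mod_cast ha0 m hm
      · exact_mod_cast ha1 m hm
      · intro m' hm'
        obtain ⟨hne, hm'E⟩ := Finset.mem_erase.mp hm'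
        have := hdist m m' hm (Finset.mem_erase.mp hm'E).1 (Ne.symm hne)
        exact_mod_cast this
      · exact_mod_cast ((hsa m hm) ∘ Eq.symm)
    · intro x hx
      have hk := key x hx
      rw [← Finset.add_sum_erase _
        (fun m' => ((x : ℂ) - ((a m' : ℝ) : ℂ))⁻¹ • EM m') hmE] at hk
      rw [← hk]; abel
  have hgEN : EN = 0 := by
    apply pole_extract (B := B) hBs (g := fun x : ℝ =>
      ((x : ℂ) - ((0 : ℝ) : ℂ))⁻¹ • E0 + ((x : ℂ) - ((1 : ℝ) : ℂ))⁻¹ • E1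
      + (∑ m ∈ Finset.univ.erase n, ((x : ℂ) - ((a m : ℝ) : ℂ))⁻¹ • EM m)
      + (∑ k ∈ Finset.range K, (x : ℂ) ^ k • F k))
    · refine (((contAt_poleterm _ E0 ?_).add (contAt_poleterm _ E1 ?_)).add
        (contAt_sumpole _ _ _ ?_)).add (contAt_polysum _ _ _)
      · exact_mod_cast hs0
      · exact_mod_cast hs1
      · intro m hm
        exact hsa' m (Finset.mem_erase.mp hm).1
    · intro x hx
      have hk := key x hx
      rw [← hk]; abel
  have hpoly : ∀ x : ℝ, x ∉ B → ∑ k ∈ Finset.range K, ((x : ℂ)) ^ k • F k = 0 := by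
    intro x hx
    have hk := key x hx
    rw [hgE0, hgE1, hgEN] at hk
    have hz : (∑ m ∈ Finset.univ.erase n, ((x : ℂ) - ((a m : ℝ) : ℂ))⁻¹ • EM m) = 0 :=
      Finset.sum_eq_zero fun m hm => by
        rw [hgEM m (Finset.mem_erase.mp hm).1, smul_zero]
    rw [hz] at hk
    simpa using hk
  have hFk := poly_extract K F B hpoly
  refine ⟨hgE0, hgE1, fun m hm => ?_, hgEN, fun k hk => ?_⟩
  · simpa [hEMdef] using hgEM m hm
  · simpa [hFdef] using hFk k hk
end
end
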